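/- Fix ℓ ∈ ℕ. Let Q ∈ Δ_m have full support (Q_i > 0 for all i), let Π be nonempty with Q ∉ Π, and assume the regularity condition on Π. Let X_1, X_2, … be i.i.d. random variables with distribution Q on the alphabet {1,…,m}, and let T_{n−ℓ} ∈ 𝒫_{n−ℓ} denote the empirical distribution (type) of (X_1,…,X_{n−ℓ}). Then lim_{n→∞} (1/(n−ℓ)) ln P(T_{n−ℓ} ∈ Π_{n,ℓ}) = −D_KL(Π ‖ Q). -/

import Mathlib

open Filter

noncomputable section

/-- The set of types of length-`n` sequences over an alphabet of size `m`:
probability vectors all of whose coordinates are integer multiples of `1/n`. -/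
def typesP (m n : ℕ) : Set (Fin m → ℝ) :=
  {p | p ∈ stdSimplex ℝ (Fin m) ∧ ∀ i, ∃ k : ℕ, p i = (k : ℝ) / (n : ℝ)}

/-- KL divergence `D_KL(P‖Q) = Σ_i P_i ln(P_i/Q_i)`. -/
def klDiv {m : ℕ} (P Q : Fin m → ℝ) : ℝ :=
  ∑ i, P i * Real.log (P i / Q i)

/-- KL divergence of a set of distributions from `Q` (as an extended real,
so that the infimum over the empty set is `+∞`). -/
def klDivSet {m : ℕ} (S : Set (Fin m → ℝ)) (Q : Fin m → ℝ) : EReal :=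
  ⨅ P : S, ((klDiv P.1 Q : ℝ) : EReal)

/-- The set `Π` determined by the `K × m` matrix `A` over the alphabet of size
`m + 1`: probability vectors whose first `m` coordinates satisfy at least one of
the `K` linear constraints `(A p)_i ≥ 0`. -/
def PiSet {K m : ℕ} (A : Matrix (Fin K) (Fin m) ℝ) : Set (Fin (m + 1) → ℝ) :=
  {p | p ∈ stdSimplex ℝ (Fin (m + 1)) ∧ ∃ i : Fin K, 0 ≤ ∑ j, A i j * p j.castSucc}

/-- The shifted set `Π_{n,ℓ}`: at least one constraint `(A p)_i ≥ ℓ/(n−ℓ)`. -/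
def PiSetShift {K m : ℕ} (A : Matrix (Fin K) (Fin m) ℝ) (n ℓ : ℕ) :
    Set (Fin (m + 1) → ℝ) :=
  {p | p ∈ stdSimplex ℝ (Fin (m + 1)) ∧
    ∃ i : Fin K, (ℓ : ℝ) / ((n : ℝ) - (ℓ : ℝ)) ≤ ∑ j, A i j * p j.castSucc}

/-- The regularity condition: every point of `Π` is a limit of points of the
simplex satisfying some constraint strictly. -/
def RegularPi {K m : ℕ} (A : Matrix (Fin K) (Fin m) ℝ) : Prop :=
  ∀ p ∈ PiSet A, p ∈ closure {q : Fin (m + 1) → ℝ |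
    q ∈ stdSimplex ℝ (Fin (m + 1)) ∧ ∃ i : Fin K, 0 < ∑ j, A i j * q j.castSucc}

open ProbabilityTheory

/-- The empirical distribution (type) of the first `n` samples. -/
def empiricalType {m : ℕ} {Ω : Type*} (Z : ℕ → Ω → Fin m) (n : ℕ) (ω : Ω) :
    Fin m → ℝ :=
  fun a => ((Finset.univ.filter fun j : Fin n => Z j ω = a).card : ℝ) / (n : ℝ)

/-!
Method of types. For a count vector `c` of length `n` over an alphabet of size `k`, the
probability that `n` i.i.d. `Q`-samples have letter counts `c` lies between
`(n+1)^(-k) exp(-n D(c/n ‖ Q))` and `exp(-n D(c/n ‖ Q))`, and there are at most `(n+1)^k`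
count vectors. Since `Π_{n,ℓ} ⊆ Π`, summing gives `P(T_n ∈ Π_{n,ℓ}) ≤ (n+1)^k exp(-n D(Π‖Q))`.
For the lower bound, regularity yields, next to an almost optimal point of `Π`, a point `q` of
the simplex satisfying one constraint strictly; the types obtained by rounding `n q` converge to
`q`, so for large `n` they lie in `Π_{n,ℓ}` (whose threshold `ℓ/n` tends to `0`) and have
divergence close to `D(Π‖Q)`. The polynomial factors vanish in the limit of `(1/n) log`.
-/

namespace MethodOfTypes

open Finset Real MeasureTheory Topology
open scoped Nat

/-- `c ^ d / d !` is maximal at `d = c`. -/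
lemma factorial_mul_pow_le_factorial_mul_pow (c d : ℕ) : c ! * c ^ d ≤ d ! * c ^ c := by
  obtain h | h := le_total c d
  · obtain ⟨k, rfl⟩ := Nat.exists_eq_add_of_le h
    calc c ! * c ^ (c + k) = c ! * c ^ k * c ^ c := by ring
      _ ≤ c ! * (c + 1) ^ k * c ^ c := by gcongr; omega
      _ ≤ (c + k)! * c ^ c := by gcongr; exact Nat.factorial_mul_pow_le_factorial
  · obtain ⟨k, rfl⟩ := Nat.exists_eq_add_of_le h
    calc (d + k)! * (d + k) ^ d = d ! * (d + 1).ascFactorial k * (d + k) ^ d := by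
          rw [Nat.factorial_mul_ascFactorial]
      _ ≤ d ! * (d + k) ^ k * (d + k) ^ d := by gcongr; exact Nat.ascFactorial_le_pow_add d k
      _ = d ! * (d + k) ^ (d + k) := by ring

section Counting

variable {α : Type*} [Fintype α] {n : ℕ}

def typeOfCount (n : ℕ) (c : α → ℕ) (a : α) : ℝ := c a / n

/-- Exactly `Nat.multinomial univ c` words have letter counts `c` (`card_letterCount_eq`), so this
is the probability that `n = ∑ a, c a` i.i.d. `Q`-samples have letter counts `c`. -/
def typeClassProb (Q : α → ℝ) (c : α → ℕ) : ℝ := Nat.multinomial univ c * ∏ a, Q a ^ c a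

lemma typeClassProb_nonneg {Q : α → ℝ} (hQ : ∀ a, 0 ≤ Q a) (c : α → ℕ) :
    0 ≤ typeClassProb Q c :=
  mul_nonneg (Nat.cast_nonneg _) (prod_nonneg fun a _ => pow_nonneg (hQ a) _)

lemma typeOfCount_mem_stdSimplex {c : α → ℕ} (hn : 0 < n) (hc : ∑ a, c a = n) :
    typeOfCount n c ∈ stdSimplex ℝ α := by
  refine ⟨fun a => by unfold typeOfCount; positivity, ?_⟩
  simp only [typeOfCount, ← sum_div, ← Nat.cast_sum, hc]
  exact div_self (by positivity)

lemma multinomial_mul_prod_pow_le {c d : α → ℕ} (hc : ∑ a, c a = n) (hd : ∑ a, d a = n) :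
    Nat.multinomial univ d * ∏ a, c a ^ d a ≤ Nat.multinomial univ c * ∏ a, c a ^ c a := by
  refine Nat.le_of_mul_le_mul_left ?_ (by positivity : 0 < (∏ a, (c a)!) * ∏ a, (d a)!)
  calc (∏ a, (c a)!) * (∏ a, (d a)!) * (Nat.multinomial univ d * ∏ a, c a ^ d a)
      = (∏ a, (c a)! * c a ^ d a) * ((∏ a, (d a)!) * Nat.multinomial univ d) := by
        rw [prod_mul_distrib]; ring
    _ ≤ (∏ a, (d a)! * c a ^ c a) * ((∏ a, (c a)!) * Nat.multinomial univ c) := by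
        rw [Nat.multinomial_spec, Nat.multinomial_spec, hc, hd]
        exact Nat.mul_le_mul_right _
          (prod_le_prod' fun a _ => factorial_mul_pow_le_factorial_mul_pow (c a) (d a))
    _ = (∏ a, (c a)!) * (∏ a, (d a)!) * (Nat.multinomial univ c * ∏ a, c a ^ c a) := by
        rw [prod_mul_distrib]; ring

lemma typeClassProb_typeOfCount_le {c d : α → ℕ} (hc : ∑ a, c a = n) (hd : ∑ a, d a = n) :
    typeClassProb (typeOfCount n c) d ≤ typeClassProb (typeOfCount n c) c := by
  have key : ∀ e : α → ℕ, ∑ a, e a = n → typeClassProb (typeOfCount n c) e =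
      (Nat.multinomial univ e * ∏ a, c a ^ e a : ℕ) / n ^ n := by
    intro e he
    simp only [typeClassProb, typeOfCount, div_pow, prod_div_distrib, prod_pow_eq_pow_sum, he]
    push_cast
    ring
  rw [key d hd, key c hc]
  exact div_le_div_of_nonneg_right (by exact_mod_cast multinomial_mul_prod_pow_le hc hd)
    (by positivity)

variable [DecidableEq α]

def letterCount (x : Fin n → α) (a : α) : ℕ := #{j | x j = a}

lemma letterCount_mem_piAntidiag (x : Fin n → α) : letterCount x ∈ piAntidiag univ n := by
  refine mem_piAntidiag.2 ⟨?_, fun a _ => mem_univ a⟩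
  unfold letterCount
  simpa using (card_eq_sum_card_fiberwise (s := univ) fun j _ => mem_univ (x j)).symm

lemma prod_comp_eq_prod_pow_letterCount {M : Type*} [CommMonoid M] (x : Fin n → α) (r : α → M) :
    ∏ j, r (x j) = ∏ a, r a ^ letterCount x a := by
  simp [← prod_fiberwise' univ x r, letterCount]

lemma card_letterCount_eq {c : α → ℕ} (hc : c ∈ piAntidiag univ n) :
    #{x : Fin n → α | letterCount x = c} = Nat.multinomial univ c := by
  -- compare the coefficients of `X ^ c` in two expansions of `(∑ a, X a) ^ n`
  open MvPolynomial in
  let F : (α → ℕ) → (α →₀ ℕ) := fun k => Finsupp.indicator univ fun a _ => k a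
  have hF : F.Injective := fun k k' h => funext fun a => by
    simpa [F] using DFunLike.congr_fun h a
  have expand : (∑ a, X a : MvPolynomial α ℕ) ^ n =
      ∑ x : Fin n → α, ∏ a, X a ^ letterCount x a := by
    rw [← Fin.prod_const, Fintype.prod_sum]
    exact sum_congr rfl fun x _ => prod_comp_eq_prod_pow_letterCount x X
  have := congrArg (coeff (F c)) expand
  rw [sum_pow_eq_sum_piAntidiag] at this
  simp only [coeff_sum, ← C_eq_coe_nat, coeff_C_mul, coeff_prod_X_pow] at this
  change (∑ k ∈ _, _ * if F c = F k then 1 else 0) =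
    ∑ x, if F c = F (letterCount x) then 1 else 0 at this
  simp only [hF.eq_iff, mul_ite, mul_one, mul_zero, sum_ite_eq, if_pos hc, sum_boole,
    Nat.cast_id] at this
  simp_rw [this, eq_comm]

lemma sum_filter_prod_eq_sum_typeClassProb (r : α → ℝ) (p : (α → ℕ) → Prop) [DecidablePred p] :
    ∑ x : Fin n → α with p (letterCount x), ∏ j, r (x j) =
      ∑ c ∈ piAntidiag univ n with p c, typeClassProb r c := by
  rw [← sum_fiberwise_of_maps_to (g := letterCount) (t := {c ∈ piAntidiag univ n | p c})
    fun x hx => mem_filter.2 ⟨letterCount_mem_piAntidiag x, (mem_filter.1 hx).2⟩]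
  refine sum_congr rfl fun c hc => ?_
  obtain ⟨hc, hpc⟩ := mem_filter.1 hc
  rw [typeClassProb, ← card_letterCount_eq hc, ← nsmul_eq_mul, ← sum_const, filter_filter]
  refine sum_congr (filter_congr fun x _ => ?_) fun x hx => ?_
  · exact and_iff_right_of_imp fun h => h ▸ hpc
  · rw [prod_comp_eq_prod_pow_letterCount, (mem_filter.1 hx).2]

lemma sum_typeClassProb_eq_one {Q : α → ℝ} (hQ : ∑ a, Q a = 1) :
    ∑ c ∈ piAntidiag univ n, typeClassProb Q c = 1 := by
  simp [typeClassProb, ← sum_pow_eq_sum_piAntidiag, hQ]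

lemma card_piAntidiag_le : #(piAntidiag (univ : Finset α) n) ≤ (n + 1) ^ Fintype.card α := by
  calc #(piAntidiag (univ : Finset α) n)
      ≤ #(Fintype.piFinset fun _ : α => range (n + 1)) := by
        refine card_le_card fun c hc => Fintype.mem_piFinset.2 fun a => ?_
        rw [mem_range, Nat.lt_succ_iff, ← (mem_piAntidiag.1 hc).1]
        exact single_le_sum (fun _ _ => Nat.zero_le _) (mem_univ a)
    _ = (n + 1) ^ Fintype.card α := by simp

lemma typeClassProb_typeOfCount_self_le_one {c : α → ℕ} (hn : 0 < n) (hc : ∑ a, c a = n) :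
    typeClassProb (typeOfCount n c) c ≤ 1 := by
  have ht := typeOfCount_mem_stdSimplex hn hc
  rw [← sum_typeClassProb_eq_one (n := n) ht.2]
  exact single_le_sum (fun d _ => typeClassProb_nonneg ht.1 d)
    (mem_piAntidiag.2 ⟨hc, fun a _ => mem_univ a⟩)

lemma one_le_mul_typeClassProb_typeOfCount_self {c : α → ℕ} (hn : 0 < n) (hc : ∑ a, c a = n) :
    1 ≤ ((n : ℝ) + 1) ^ Fintype.card α * typeClassProb (typeOfCount n c) c := by
  have ht := typeOfCount_mem_stdSimplex hn hc
  calc (1 : ℝ) = ∑ d ∈ piAntidiag univ n, typeClassProb (typeOfCount n c) d :=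
        (sum_typeClassProb_eq_one ht.2).symm
    _ ≤ #(piAntidiag (univ : Finset α) n) • typeClassProb (typeOfCount n c) c :=
        sum_le_card_nsmul _ _ _ fun d hd =>
          typeClassProb_typeOfCount_le hc (mem_piAntidiag.1 hd).1
    _ ≤ ((n : ℝ) + 1) ^ Fintype.card α * typeClassProb (typeOfCount n c) c := by
        rw [nsmul_eq_mul]
        gcongr
        · exact typeClassProb_nonneg ht.1 c
        · exact_mod_cast card_piAntidiag_le

end Counting

section Approximation

variable {α : Type*} [Fintype α] [DecidableEq α]

lemma exists_mem_piAntidiag_abs_sub_le {q : α → ℝ} (hq : q ∈ stdSimplex ℝ α) (n : ℕ) :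
    ∃ c ∈ piAntidiag univ n, ∀ a, |(c a : ℝ) - n * q a| ≤ Fintype.card α := by
  obtain ⟨a₀⟩ : Nonempty α := by
    by_contra h
    rw [not_nonempty_iff] at h
    simpa using hq.2
  let e : α → ℝ := fun a => n * q a - ⌊n * q a⌋₊
  have he0 : ∀ a, 0 ≤ e a := fun a =>
    sub_nonneg.2 (Nat.floor_le (mul_nonneg n.cast_nonneg (hq.1 a)))
  have he1 : ∀ a, e a ≤ 1 := fun a => by
    have := Nat.lt_floor_add_one (n * q a)
    simp only [e]
    linarith
  let S := ∑ a, ⌊n * q a⌋₊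
  have hS : (S : ℝ) + ∑ a, e a = n := by
    simp [S, e, sum_sub_distrib, ← mul_sum, hq.2]
  have hSn : S ≤ n := by
    have := sum_nonneg fun a (_ : a ∈ univ) => he0 a
    exact_mod_cast (by linarith : (S : ℝ) ≤ n)
  let c : α → ℕ := fun a => ⌊n * q a⌋₊ + if a = a₀ then n - S else 0
  refine ⟨c, mem_piAntidiag.2 ⟨?_, fun a _ => mem_univ a⟩, fun a => ?_⟩
  · simp only [c, sum_add_distrib, sum_ite_eq', mem_univ, if_true]
    omega
  have hca : (c a : ℝ) - n * q a = (if a = a₀ then ∑ b, e b else 0) - e a := by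
    simp only [c, e]
    split_ifs
    · push_cast [Nat.cast_sub hSn]
      linarith
    · push_cast
      ring
  have hsum_le : ∑ b, e b ≤ Fintype.card α := by
    simpa using sum_le_sum fun b (_ : b ∈ univ) => he1 b
  have he_le : e a ≤ ∑ b, e b := single_le_sum (fun b _ => he0 b) (mem_univ a)
  rw [hca, abs_le]
  split_ifs <;> constructor <;> linarith [he0 a]

lemma exists_tendsto_typeOfCount {q : α → ℝ} (hq : q ∈ stdSimplex ℝ α) :
    ∃ c : ℕ → α → ℕ, (∀ n, c n ∈ piAntidiag univ n) ∧
      Tendsto (fun n => typeOfCount n (c n)) atTop (𝓝 q) := by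
  choose c hc hclose using exists_mem_piAntidiag_abs_sub_le hq
  refine ⟨c, hc, tendsto_pi_nhds.2 fun a => tendsto_iff_norm_sub_tendsto_zero.2 ?_⟩
  refine squeeze_zero' (Eventually.of_forall fun n => norm_nonneg _) ?_
    (tendsto_const_div_atTop_nhds_zero_nat (Fintype.card α : ℝ))
  filter_upwards [eventually_gt_atTop 0] with n hn
  have hn' : (0 : ℝ) < n := Nat.cast_pos.2 hn
  have : typeOfCount n (c n) a - q a = ((c n a : ℝ) - n * q a) / n := by
    rw [typeOfCount]
    field_simp
  rw [Real.norm_eq_abs, this, abs_div, abs_of_pos hn']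
  exact div_le_div_of_nonneg_right (hclose n a) hn'.le

end Approximation

section KullbackLeibler

variable {k : ℕ} {Q : Fin k → ℝ}

lemma klDiv_nonneg {P : Fin k → ℝ} (hP : P ∈ stdSimplex ℝ (Fin k))
    (hQ : Q ∈ stdSimplex ℝ (Fin k)) (hQpos : ∀ a, 0 < Q a) : 0 ≤ klDiv P Q := by
  have term : ∀ a, P a * log (P a / Q a) =
      Q a * InformationTheory.klFun (P a / Q a) + (P a - Q a) := by
    intro a
    have := (hQpos a).ne'
    rw [InformationTheory.klFun_apply]
    field_simp
    ring
  rw [klDiv, sum_congr rfl fun a _ => term a, sum_add_distrib, sum_sub_distrib, hP.2, hQ.2,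
    sub_self, add_zero]
  exact sum_nonneg fun a _ => mul_nonneg (hQpos a).le
    (InformationTheory.klFun_nonneg (div_nonneg (hP.1 a) (hQpos a).le))

lemma continuous_klDiv (hQ : ∀ a, 0 < Q a) : Continuous fun P : Fin k → ℝ => klDiv P Q := by
  have h : ∀ P : Fin k → ℝ, klDiv P Q = ∑ a, Q a * (P a / Q a * log (P a / Q a)) := fun P =>
    sum_congr rfl fun a _ => by field_simp [(hQ a).ne']
  simp_rw [h]
  exact continuous_finsetSum _ fun a _ => continuous_const.mul
    (continuous_mul_log.comp ((continuous_apply a).div_const _))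

lemma pow_eq_pow_mul_exp_neg {q t : ℝ} (hq : 0 < q) {c : ℕ} (ht : c = 0 ∨ 0 < t) :
    q ^ c = t ^ c * exp (-(c * log (t / q))) := by
  obtain rfl | ht := ht
  · simp
  · rw [← log_pow, exp_neg, exp_log (by positivity), div_pow]
    field_simp

lemma typeClassProb_eq_mul_exp {n : ℕ} {c : Fin k → ℕ} (hc : ∑ a, c a = n) (hQ : ∀ a, 0 < Q a) :
    typeClassProb Q c =
      typeClassProb (typeOfCount n c) c * exp (-(n * klDiv (typeOfCount n c) Q)) := by
  have hcn : ∀ a, c a ≤ n := fun a => hc ▸ single_le_sum (fun _ _ => Nat.zero_le _) (mem_univ a)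
  have hnkl : n * klDiv (typeOfCount n c) Q = ∑ a, c a * log (typeOfCount n c a / Q a) := by
    rw [klDiv, mul_sum]
    refine sum_congr rfl fun a _ => ?_
    rw [← mul_assoc, typeOfCount]
    rcases Nat.eq_zero_or_pos (c a) with h | h
    · simp [h]
    · rw [mul_div_cancel₀ _ (Nat.cast_ne_zero.2 (h.trans_le (hcn a)).ne')]
  rw [hnkl, ← sum_neg_distrib, exp_sum, typeClassProb, typeClassProb, mul_assoc,
    ← prod_mul_distrib]
  congr 1
  refine prod_congr rfl fun a _ => pow_eq_pow_mul_exp_neg (hQ a) ?_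
  rcases Nat.eq_zero_or_pos (c a) with h | h
  · exact Or.inl h
  · exact Or.inr (div_pos (Nat.cast_pos.2 h) (Nat.cast_pos.2 (h.trans_le (hcn a))))

lemma typeClassProb_le_exp {n : ℕ} {c : Fin k → ℕ} (hn : 0 < n) (hc : ∑ a, c a = n)
    (hQ : ∀ a, 0 < Q a) :
    typeClassProb Q c ≤ exp (-(n * klDiv (typeOfCount n c) Q)) := by
  rw [typeClassProb_eq_mul_exp hc hQ]
  exact mul_le_of_le_one_left (exp_nonneg _) (typeClassProb_typeOfCount_self_le_one hn hc)

lemma exp_le_mul_typeClassProb {n : ℕ} {c : Fin k → ℕ} (hn : 0 < n) (hc : ∑ a, c a = n)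
    (hQ : ∀ a, 0 < Q a) :
    exp (-(n * klDiv (typeOfCount n c) Q)) ≤ ((n : ℝ) + 1) ^ k * typeClassProb Q c := by
  have h := one_le_mul_typeClassProb_typeOfCount_self hn hc
  rw [Fintype.card_fin] at h
  rw [typeClassProb_eq_mul_exp hc hQ, ← mul_assoc]
  exact le_mul_of_one_le_left (exp_nonneg _) h

end KullbackLeibler

section Sampling

variable {k : ℕ} {Ω : Type*} [MeasurableSpace Ω] {P : Measure Ω} {Z : ℕ → Ω → Fin k}
  {Q : Fin k → ℝ}

lemma measure_forall_apply_eq_prod (hindep : iIndepFun Z P)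
    (hdist : ∀ i a, P {ω | Z i ω = a} = ENNReal.ofReal (Q a)) {n : ℕ} (x : Fin n → Fin k) :
    P {ω | ∀ j : Fin n, Z j ω = x j} = ∏ j, ENNReal.ofReal (Q (x j)) := by
  have hfin : iIndepFun (fun j : Fin n => Z j) P := hindep.precomp Fin.val_injective
  calc P {ω | ∀ j : Fin n, Z j ω = x j}
      = P (⋂ j ∈ univ, (fun j : Fin n => Z j) j ⁻¹' {x j}) := by congr 1; ext ω; simp
    _ = ∏ j : Fin n, P (Z j ⁻¹' {x j}) :=
        hfin.measure_inter_preimage_eq_mul univ fun _ _ => measurableSet_singleton _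
    _ = ∏ j : Fin n, ENNReal.ofReal (Q (x j)) := prod_congr rfl fun j _ => hdist j (x j)

lemma measureReal_empiricalType_mem_eq_sum (hmeas : ∀ i, Measurable (Z i)) (hindep : iIndepFun Z P)
    (hdist : ∀ i a, P {ω | Z i ω = a} = ENNReal.ofReal (Q a)) (hQ : ∀ a, 0 ≤ Q a) (n : ℕ)
    (S : Set (Fin k → ℝ)) [DecidablePred fun c : Fin k → ℕ => typeOfCount n c ∈ S] :
    P.real {ω | empiricalType Z n ω ∈ S} =
      ∑ c ∈ piAntidiag univ n with typeOfCount n c ∈ S, typeClassProb Q c := by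
  let V : Ω → Fin n → Fin k := fun ω j => Z j ω
  have hword : ∀ x, V ⁻¹' {x} = {ω | ∀ j : Fin n, Z j ω = x j} := fun x => by
    ext ω; simp [V, funext_iff]
  have hevent : {ω | empiricalType Z n ω ∈ S} =
      V ⁻¹' ↑({x | typeOfCount n (letterCount x) ∈ S} : Finset (Fin n → Fin k)) := by
    ext ω; simp [V]; rfl
  rw [hevent, ← sum_measureReal_preimage_singleton _
    (fun x _ => measurable_pi_lambda V (fun j => hmeas j) (measurableSet_singleton x))
    (fun x _ => by simp [hword, measure_forall_apply_eq_prod hindep hdist, ENNReal.prod_ne_top]),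
    ← sum_filter_prod_eq_sum_typeClassProb]
  refine sum_congr rfl fun x _ => ?_
  rw [measureReal_def, hword, measure_forall_apply_eq_prod hindep hdist, ENNReal.toReal_prod]
  exact prod_congr rfl fun j _ => ENNReal.toReal_ofReal (hQ _)

lemma measureReal_empiricalType_mem_le (hmeas : ∀ i, Measurable (Z i))
    (hindep : iIndepFun Z P) (hdist : ∀ i a, P {ω | Z i ω = a} = ENNReal.ofReal (Q a))
    (hQ : ∀ a, 0 < Q a) {n : ℕ} (hn : 0 < n) {S : Set (Fin k → ℝ)} {D : ℝ}
    (hD : ∀ p ∈ S, D ≤ klDiv p Q) :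
    P.real {ω | empiricalType Z n ω ∈ S} ≤ ((n : ℝ) + 1) ^ k * exp (-(n * D)) := by
  classical
  rw [measureReal_empiricalType_mem_eq_sum hmeas hindep hdist (fun a => (hQ a).le)]
  calc ∑ c ∈ piAntidiag univ n with typeOfCount n c ∈ S, typeClassProb Q c
      ≤ ∑ c ∈ piAntidiag univ n with typeOfCount n c ∈ S, exp (-(n * D)) := by
        refine sum_le_sum fun c hc => ?_
        obtain ⟨hc, hcS⟩ := mem_filter.1 hc
        refine (typeClassProb_le_exp hn (mem_piAntidiag.1 hc).1 hQ).trans (exp_le_exp.2 ?_)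
        exact neg_le_neg (mul_le_mul_of_nonneg_left (hD _ hcS) n.cast_nonneg)
    _ ≤ ∑ c ∈ piAntidiag univ n, exp (-(n * D)) :=
        sum_le_sum_of_subset_of_nonneg (filter_subset _ _) fun _ _ _ => (exp_pos _).le
    _ ≤ ((n : ℝ) + 1) ^ k * exp (-(n * D)) := by
        rw [sum_const, nsmul_eq_mul]
        gcongr
        have := card_piAntidiag_le (α := Fin k) (n := n)
        rw [Fintype.card_fin] at this
        exact_mod_cast this

lemma exp_le_mul_measureReal_empiricalType_mem (hmeas : ∀ i, Measurable (Z i))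
    (hindep : iIndepFun Z P) (hdist : ∀ i a, P {ω | Z i ω = a} = ENNReal.ofReal (Q a))
    (hQ : ∀ a, 0 < Q a) {n : ℕ} (hn : 0 < n) {S : Set (Fin k → ℝ)} {c : Fin k → ℕ}
    (hc : c ∈ piAntidiag univ n) (hcS : typeOfCount n c ∈ S) :
    exp (-(n * klDiv (typeOfCount n c) Q)) ≤
      ((n : ℝ) + 1) ^ k * P.real {ω | empiricalType Z n ω ∈ S} := by
  classical
  rw [measureReal_empiricalType_mem_eq_sum hmeas hindep hdist (fun a => (hQ a).le)]
  refine (exp_le_mul_typeClassProb hn (mem_piAntidiag.1 hc).1 hQ).trans ?_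
  gcongr
  exact single_le_sum (fun d _ => typeClassProb_nonneg (fun a => (hQ a).le) d)
    (mem_filter.2 ⟨hc, hcS⟩)

end Sampling

lemma tendsto_mul_log_add_one_div_atTop (k : ℝ) :
    Tendsto (fun n : ℕ => k * log (n + 1) / n) atTop (𝓝 0) := by
  have h := (tendsto_pow_log_div_mul_add_atTop 1 (-1) 1 one_ne_zero).comp
    (tendsto_atTop_add_const_right _ 1 tendsto_natCast_atTop_atTop)
  simpa [mul_div_assoc] using h.const_mul k

lemma tendsto_inv_mul_log_of_exp_bounds {u : ℕ → ℝ} {k : ℕ} {D : ℝ}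
    (hupper : ∀ᶠ n : ℕ in atTop, u n ≤ ((n : ℝ) + 1) ^ k * exp (-(n * D)))
    (hlower : ∀ ε > 0, ∀ᶠ n : ℕ in atTop, exp (-(n * (D + ε))) ≤ ((n : ℝ) + 1) ^ k * u n) :
    Tendsto (fun n : ℕ => 1 / (n : ℝ) * log (u n)) atTop (𝓝 (-D)) := by
  have hpoly := tendsto_mul_log_add_one_div_atTop k
  have hpos : ∀ᶠ n : ℕ in atTop, 0 < u n := (hlower 1 one_pos).mono fun n hn =>
    pos_of_mul_pos_right ((exp_pos _).trans_le hn) (by positivity)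
  have log_lower : ∀ ε > 0, ∀ᶠ n : ℕ in atTop,
      -(n * (D + ε)) ≤ k * log (n + 1) + log (u n) := fun ε hε => by
    filter_upwards [hlower ε hε, hpos] with n hn hu
    have := log_le_log (exp_pos _) hn
    rwa [log_exp, log_mul (by positivity) hu.ne', log_pow] at this
  rw [tendsto_order]
  constructor
  · intro a ha
    have hε : 0 < (-D - a) / 2 := by linarith
    filter_upwards [log_lower _ hε, hpoly.eventually (gt_mem_nhds hε), eventually_gt_atTop 0]
      with n hlog hsmall hn
    have hn' : (0 : ℝ) < n := Nat.cast_pos.2 hn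
    rw [one_div_mul_eq_div, lt_div_iff₀ hn']
    rw [div_lt_iff₀ hn'] at hsmall
    linarith
  · intro b hb
    have hε : 0 < b + D := by linarith
    filter_upwards [hupper, hpos, hpoly.eventually (gt_mem_nhds hε), eventually_gt_atTop 0]
      with n hup hu hsmall hn
    have hn' : (0 : ℝ) < n := Nat.cast_pos.2 hn
    have := log_le_log hu hup
    rw [log_mul (by positivity) (exp_pos _).ne', log_pow, log_exp] at this
    rw [one_div_mul_eq_div, div_lt_iff₀ hn']
    rw [div_lt_iff₀ hn'] at hsmall
    linarith

section Constraints

variable {K m : ℕ} (A : Matrix (Fin K) (Fin m) ℝ)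

lemma piSetShift_subset_piSet {n ℓ : ℕ} (h : ℓ ≤ n) : PiSetShift A n ℓ ⊆ PiSet A :=
  fun _ ⟨hp, i, hi⟩ =>
    ⟨hp, i, (div_nonneg ℓ.cast_nonneg (sub_nonneg.2 (Nat.cast_le.2 h))).trans hi⟩

lemma eventually_mem_piSetShift {p : ℕ → Fin (m + 1) → ℝ} {q : Fin (m + 1) → ℝ}
    (hp : Tendsto p atTop (𝓝 q)) (hp_mem : ∀ᶠ n in atTop, p n ∈ stdSimplex ℝ (Fin (m + 1)))
    (hq : ∃ i, 0 < ∑ j, A i j * q j.castSucc) (ℓ : ℕ) :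
    ∀ᶠ n in atTop, p n ∈ PiSetShift A (n + ℓ) ℓ := by
  obtain ⟨i, hi⟩ := hq
  have hconstraint : Tendsto (fun n => ∑ j, A i j * p n j.castSucc) atTop
      (𝓝 (∑ j, A i j * q j.castSucc)) :=
    tendsto_finsetSum _ fun j _ => (tendsto_pi_nhds.1 hp j.castSucc).const_mul _
  have hthreshold : Tendsto (fun n : ℕ => (ℓ : ℝ) / (((n + ℓ : ℕ) : ℝ) - ℓ)) atTop (𝓝 0) := by
    simpa using tendsto_const_div_atTop_nhds_zero_nat (ℓ : ℝ)
  filter_upwards [hp_mem, hthreshold.eventually_lt hconstraint hi] with n hn hlt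
  exact ⟨hn, i, hlt.le⟩

end Constraints

end MethodOfTypes

open MethodOfTypes in
theorem sanov_error_exponent_shifted_general
    {K m : ℕ} (A : Matrix (Fin K) (Fin m) ℝ) (ℓ : ℕ)
    (Q : Fin (m + 1) → ℝ) (hQ : Q ∈ stdSimplex ℝ (Fin (m + 1)))
    (hQpos : ∀ i, 0 < Q i)
    (hne : (PiSet A).Nonempty)
    (hreg : RegularPi A)
    {Ω : Type*} [MeasurableSpace Ω] (P : MeasureTheory.Measure Ω)
    (Z : ℕ → Ω → Fin (m + 1))
    (hmeas : ∀ i, Measurable (Z i))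
    (hindep : iIndepFun Z P)
    (hdist : ∀ (i : ℕ) (a : Fin (m + 1)), P {ω | Z i ω = a} = ENNReal.ofReal (Q a)) :
    Tendsto
      (fun n : ℕ => (1 / ((n : ℝ) - (ℓ : ℝ))) *
        Real.log ((P {ω | empiricalType Z (n - ℓ) ω ∈ PiSetShift A n ℓ}).toReal))
      atTop
      (nhds (-(sInf ((fun p => klDiv p Q) '' PiSet A)))) := by
  set D := sInf ((fun p => klDiv p Q) '' PiSet A)
  have hD_le : ∀ p ∈ PiSet A, D ≤ klDiv p Q := fun p hp =>
    csInf_le ⟨0, by rintro _ ⟨q, hq, rfl⟩; exact klDiv_nonneg hq.1 hQ hQpos⟩ ⟨p, hp, rfl⟩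
  rw [← tendsto_add_atTop_iff_nat ℓ]
  simp only [Nat.add_sub_cancel, Nat.cast_add, add_sub_cancel_right,
    ← MeasureTheory.measureReal_def]
  refine tendsto_inv_mul_log_of_exp_bounds (k := m + 1) ?_ fun ε hε => ?_
  · filter_upwards [eventually_gt_atTop 0] with n hn
    exact measureReal_empiricalType_mem_le hmeas hindep hdist hQpos hn fun p hp =>
      hD_le p (piSetShift_subset_piSet A (Nat.le_add_left ℓ n) hp)
  · obtain ⟨_, ⟨p, hp, rfl⟩, hpD⟩ :=
      exists_lt_of_csInf_lt (hne.image _) (lt_add_of_pos_right D hε)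
    have hU : IsOpen {r | klDiv r Q < D + ε} := isOpen_lt (continuous_klDiv hQpos) continuous_const
    obtain ⟨q, hqU, hq, hq_strict⟩ := mem_closure_iff_nhds.1 (hreg p hp) _ (hU.mem_nhds hpD)
    obtain ⟨c, hc, hlim⟩ := exists_tendsto_typeOfCount hq
    have hc_simplex : ∀ᶠ n in atTop, typeOfCount n (c n) ∈ stdSimplex ℝ (Fin (m + 1)) :=
      (eventually_gt_atTop 0).mono fun n hn =>
        typeOfCount_mem_stdSimplex hn (Finset.mem_piAntidiag.1 (hc n)).1
    filter_upwards [hlim.eventually (hU.mem_nhds hqU),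
      eventually_mem_piSetShift A hlim hc_simplex hq_strict ℓ, eventually_gt_atTop 0]
      with n hn_kl hn_shift hn
    calc Real.exp (-(n * (D + ε))) ≤ Real.exp (-(n * klDiv (typeOfCount n (c n)) Q)) := by
          gcongr
      _ ≤ _ := exp_le_mul_measureReal_empiricalType_mem hmeas hindep hdist hQpos hn (hc n)
          hn_shift

/-- for i.i.d. samples with full-support distribution `Q ∉ Π`,
`Π` nonempty and regular, and any fixed `ℓ ∈ ℕ`,
`lim_{n→∞} (1/(n−ℓ)) ln P(T_{n−ℓ} ∈ Π_{n,ℓ}) = −D_KL(Π‖Q)`. -/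
theorem sanov_error_exponent_shifted
    {K m : ℕ} (A : Matrix (Fin K) (Fin m) ℝ) (ℓ : ℕ)
    (Q : Fin (m + 1) → ℝ) (hQ : Q ∈ stdSimplex ℝ (Fin (m + 1)))
    (hQpos : ∀ i, 0 < Q i)
    (hne : (PiSet A).Nonempty) (hQnot : Q ∉ PiSet A)
    (hreg : RegularPi A)
    {Ω : Type*} [MeasurableSpace Ω] (P : MeasureTheory.Measure Ω)
    [MeasureTheory.IsProbabilityMeasure P]
    (Z : ℕ → Ω → Fin (m + 1))
    (hmeas : ∀ i, Measurable (Z i))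
    (hindep : iIndepFun Z P)
    (hdist : ∀ (i : ℕ) (a : Fin (m + 1)), P {ω | Z i ω = a} = ENNReal.ofReal (Q a)) :
    Tendsto
      (fun n : ℕ => (1 / ((n : ℝ) - (ℓ : ℝ))) *
        Real.log ((P {ω | empiricalType Z (n - ℓ) ω ∈ PiSetShift A n ℓ}).toReal))
      atTop
      (nhds (-(sInf ((fun p => klDiv p Q) '' PiSet A)))) :=
  sanov_error_exponent_shifted_general A ℓ Q hQ hQpos hne hreg P Z hmeas hindep hdist

end
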